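/- Let R be a strong singularity function, let ε ∈ (0,1], and define σ(y) := ∫_y^ε dτ/R(τ). Then σ restricted to the open interval (0,ε) is a smooth diffeomorphism onto (0,∞): σ is infinitely differentiable on (0,ε), maps (0,ε) bijectively onto (0,∞), and there exists a function τ : ℝ → ℝ that is infinitely differentiable on (0,∞) and is a two-sided inverse of σ between (0,ε) and (0,∞) (τ(σ(y)) = y for y ∈ (0,ε) and σ(τ(s)) = s for s ∈ (0,∞)). -/

import Mathlib

open MeasureTheory Set intervalIntegral
open scoped Topology NNReal ENNReal

/-- Let `R` be a strong singularity function, `ε ∈ (0,1]`, and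
`σ y := ∫_y^ε dτ/R(τ)`. Then `σ` restricted to `(0,ε)` is a smooth diffeomorphism
onto `(0,∞)`: it is infinitely differentiable on `(0,ε)`, maps `(0,ε)` bijectively
onto `(0,∞)`, and there is a function `τ` infinitely differentiable on `(0,∞)` which
is a two-sided inverse of `σ` between `(0,ε)` and `(0,∞)`. -/
theorem sigma_smooth_diffeomorphism (R : ℝ → ℝ)
    (hsmooth : ContDiffOn ℝ (⊤ : ℕ∞) R (Ioc 0 1)) (hpos : ∀ y ∈ Ioc (0:ℝ) 1, 0 < R y)
    (hint : (∫⁻ y in Ioo (0:ℝ) 1, ENNReal.ofReal (1 / R y)) = ⊤)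
    (ε : ℝ) (hε : ε ∈ Ioc (0:ℝ) 1)
    (σ : ℝ → ℝ) (hσ : ∀ y, σ y = ∫ t in y..ε, (R t)⁻¹) :
    ContDiffOn ℝ (⊤ : ℕ∞) σ (Ioo 0 ε) ∧
    Set.BijOn σ (Ioo 0 ε) (Ioi 0) ∧
    ∃ τ : ℝ → ℝ, ContDiffOn ℝ (⊤ : ℕ∞) τ (Ioi 0) ∧
      (∀ y ∈ Ioo (0:ℝ) ε, τ (σ y) = y) ∧ (∀ s ∈ Ioi (0:ℝ), σ (τ s) = s) := by
  obtain ⟨hε0, hε1⟩ := hε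
  have hεI : ε ∈ Ioc (0:ℝ) 1 := ⟨hε0, hε1⟩
  set f : ℝ → ℝ := fun t => (R t)⁻¹ with hfdef
  have hRne : ∀ x ∈ Ioc (0:ℝ) 1, R x ≠ 0 := fun x hx => (hpos x hx).ne'
  have hfcont : ContinuousOn f (Ioc 0 1) := hsmooth.continuousOn.inv₀ hRne
  have hfpos : ∀ x ∈ Ioc (0:ℝ) 1, 0 < f x := fun x hx => inv_pos.2 (hpos x hx)
  have hint' : (∫⁻ y in Ioo (0:ℝ) 1, ENNReal.ofReal (f y)) = ⊤ := by
    simpa [hfdef, one_div] using hint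
  have huIcc : ∀ a ∈ Ioc (0:ℝ) 1, ∀ b ∈ Ioc (0:ℝ) 1, uIcc a b ⊆ Ioc 0 1 := by
    intro a ha b hb x hx
    rw [mem_uIcc] at hx
    rcases hx with ⟨h1, h2⟩ | ⟨h1, h2⟩
    · exact ⟨lt_of_lt_of_le ha.1 h1, h2.trans hb.2⟩
    · exact ⟨lt_of_lt_of_le hb.1 h1, h2.trans ha.2⟩
  have hInt : ∀ a ∈ Ioc (0:ℝ) 1, ∀ b ∈ Ioc (0:ℝ) 1, IntervalIntegrable f volume a b :=
    fun a ha b hb => (hfcont.mono (huIcc a ha b hb)).intervalIntegrable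
  have hIocsub : Ioc (0:ℝ) ε ⊆ Ioc 0 1 := Ioc_subset_Ioc le_rfl hε1
  have hIoosub : Ioo (0:ℝ) ε ⊆ Ioc 0 1 := fun x hx => hIocsub (Ioo_subset_Ioc_self hx)
  have hsplit : ∀ a ∈ Ioc (0:ℝ) 1, ∀ b ∈ Ioc (0:ℝ) 1, σ a = (∫ t in a..b, f t) + σ b := by
    intro a ha b hb
    rw [hσ, hσ]
    exact (integral_add_adjacent_intervals (hInt a ha b hb) (hInt b hb ε hεI)).symm
  have hσε : σ ε = 0 := by rw [hσ]; exact integral_same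
  have hanti : StrictAntiOn σ (Ioc 0 ε) := by
    intro a ha b hb hab
    have h1 := hsplit a (hIocsub ha) b (hIocsub hb)
    have h2 : 0 < ∫ t in a..b, f t := by
      apply intervalIntegral_pos_of_pos_on (hInt a (hIocsub ha) b (hIocsub hb)) _ hab
      intro x hx
      exact hfpos x ⟨ha.1.trans hx.1, hx.2.le.trans (hb.2.trans hε1)⟩
    linarith
  have hpos_σ : ∀ y ∈ Ioo (0:ℝ) ε, 0 < σ y := by
    intro y hy
    have := hanti (Ioo_subset_Ioc_self hy) ⟨hε0, le_rfl⟩ hy.2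
    rwa [hσε] at this
  -- derivative of σ
  have hderiv : ∀ x ∈ Ioo (0:ℝ) ε, HasDerivAt σ (-(f x)) x := by
    intro x hx
    have hx1 : x ∈ Ioo (0:ℝ) 1 := ⟨hx.1, lt_of_lt_of_le hx.2 hε1⟩
    have hcf : ContinuousOn f (Ioo 0 1) := hfcont.mono Ioo_subset_Ioc_self
    have hca : ContinuousAt f x := hcf.continuousAt (Ioo_mem_nhds hx1.1 hx1.2)
    have hmeas := ContinuousOn.stronglyMeasurableAtFilter (μ := volume) isOpen_Ioo hcf x hx1
    have h1 : HasDerivAt (fun y => ∫ t in ε..y, f t) (f x) x :=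
      integral_hasDerivAt_right (hInt ε hεI x (hIoosub hx)) hmeas hca
    have heq : σ = fun y => -∫ t in ε..y, f t := funext fun y => by rw [hσ, integral_symm]
    rw [heq]
    exact h1.neg
  -- analyticity (= C^ω smoothness) of σ
  have hσsm : ContDiffOn ℝ (⊤ : ℕ∞) σ (Ioo 0 ε) := by
    have hfsm : ContDiffOn ℝ (⊤ : ℕ∞) (fun x => -(f x)) (Ioo 0 ε) :=
      ((hsmooth.mono hIoosub).inv (fun x hx => hRne x (hIoosub hx))).neg
    rw [contDiffOn_infty_iff_deriv_of_isOpen isOpen_Ioo]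
    refine ⟨fun x hx => (hderiv x hx).differentiableAt.differentiableWithinAt, ?_⟩
    exact hfsm.congr fun x hx => (hderiv x hx).deriv
  -- unboundedness of σ near 0
  have hunb : ∀ s : ℝ, ∃ y ∈ Ioo (0:ℝ) ε, s < σ y := by
    intro s
    by_contra hcon
    push_neg at hcon
    have key : ∀ y ∈ Ioo (0:ℝ) ε, (∫⁻ x in Ioc y ε, ENNReal.ofReal (f x)) ≤ ENNReal.ofReal s := by
      intro y hy
      have hyI : y ∈ Ioc (0:ℝ) 1 := hIoosub hy
      have hio : IntegrableOn f (Ioc y ε) :=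
        (intervalIntegrable_iff_integrableOn_Ioc_of_le hy.2.le).1 (hInt y hyI ε hεI)
      have hnn : 0 ≤ᵐ[volume.restrict (Ioc y ε)] f := by
        filter_upwards [ae_restrict_mem measurableSet_Ioc] with x hx
        exact (hfpos x ⟨hy.1.trans hx.1, hx.2.trans hε1⟩).le
      have heq1 : (∫⁻ x in Ioc y ε, ENNReal.ofReal (f x))
          = ENNReal.ofReal (∫ x in Ioc y ε, f x) :=
        (ofReal_integral_eq_lintegral_ofReal hio hnn).symm
      have heq2 : (∫ x in Ioc y ε, f x) = σ y := by
        rw [hσ y, intervalIntegral.integral_of_le hy.2.le]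
      rw [heq1, heq2]
      exact ENNReal.ofReal_le_ofReal (hcon y hy)
    have hcover : Ioo (0:ℝ) ε ⊆ ⋃ n : ℕ, Ioc (ε / ((n : ℝ) + 2)) ε := by
      intro x hx
      obtain ⟨n, hn⟩ := exists_nat_gt (ε / x)
      refine mem_iUnion.2 ⟨n, ?_, hx.2.le⟩
      rw [div_lt_iff₀ (by positivity)]
      have h1 : ε < n * x := (div_lt_iff₀ hx.1).1 hn
      nlinarith [hx.1]
    have hdir : Directed (· ⊆ ·) (fun n : ℕ => Ioc (ε / ((n : ℝ) + 2)) ε) := by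
      intro m n
      refine ⟨max m n, Ioc_subset_Ioc_left ?_, Ioc_subset_Ioc_left ?_⟩
      · gcongr
        · exact_mod_cast Nat.le_max_left m n
      · gcongr
        · exact_mod_cast Nat.le_max_right m n
    have h1 : (∫⁻ x in Ioo (0:ℝ) ε, ENNReal.ofReal (f x)) ≤ ENNReal.ofReal s := by
      calc (∫⁻ x in Ioo (0:ℝ) ε, ENNReal.ofReal (f x))
          ≤ ∫⁻ x in ⋃ n : ℕ, Ioc (ε / ((n : ℝ) + 2)) ε, ENNReal.ofReal (f x) :=
            lintegral_mono_set hcover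
        _ = ⨆ n : ℕ, ∫⁻ x in Ioc (ε / ((n : ℝ) + 2)) ε, ENNReal.ofReal (f x) :=
            setLIntegral_iUnion_of_directed _ hdir
        _ ≤ ENNReal.ofReal s := by
            refine iSup_le fun n => key _ ⟨by positivity, ?_⟩
            apply div_lt_self hε0
            have : (0:ℝ) ≤ (n : ℝ) := Nat.cast_nonneg n
            linarith
    have h2 : (∫⁻ x in Ico ε 1, ENNReal.ofReal (f x)) < ⊤ := by
      have hIccsub : Icc ε 1 ⊆ Ioc (0:ℝ) 1 := fun x hx => ⟨hε0.trans_le hx.1, hx.2⟩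
      obtain ⟨C, hC⟩ := isCompact_Icc.exists_bound_of_continuousOn (hfcont.mono hIccsub)
      calc (∫⁻ x in Ico ε 1, ENNReal.ofReal (f x))
          ≤ ∫⁻ _ in Ico ε 1, ENNReal.ofReal C := by
            refine setLIntegral_mono measurable_const fun x hx => ?_
            exact ENNReal.ofReal_le_ofReal
              ((le_abs_self _).trans (hC x (Ico_subset_Icc_self hx)))
        _ = ENNReal.ofReal C * volume (Ico ε 1) := by rw [setLIntegral_const]
        _ < ⊤ := ENNReal.mul_lt_top ENNReal.ofReal_lt_top (by simp [Real.volume_Ico])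
    have hsub2 : Ioo (0:ℝ) 1 ⊆ Ioo 0 ε ∪ Ico ε 1 := by
      intro x hx
      rcases lt_or_ge x ε with h | h
      · exact Or.inl ⟨hx.1, h⟩
      · exact Or.inr ⟨h, hx.2⟩
    have htot : (∫⁻ y in Ioo (0:ℝ) 1, ENNReal.ofReal (f y))
        ≤ ENNReal.ofReal s + ∫⁻ x in Ico ε 1, ENNReal.ofReal (f x) := by
      calc (∫⁻ y in Ioo (0:ℝ) 1, ENNReal.ofReal (f y))
          ≤ ∫⁻ y in Ioo (0:ℝ) ε ∪ Ico ε 1, ENNReal.ofReal (f y) := lintegral_mono_set hsub2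
        _ ≤ (∫⁻ x in Ioo (0:ℝ) ε, ENNReal.ofReal (f x))
            + ∫⁻ x in Ico ε 1, ENNReal.ofReal (f x) := lintegral_union_le _ _ _
        _ ≤ _ := add_le_add_left h1 _
    rw [hint'] at htot
    exact absurd (htot.trans_lt (ENNReal.add_lt_top.2 ⟨ENNReal.ofReal_lt_top, h2⟩))
      (lt_irrefl _)
  -- bijectivity
  have hMaps : MapsTo σ (Ioo 0 ε) (Ioi 0) := fun y hy => mem_Ioi.2 (hpos_σ y hy)
  have hInj : InjOn σ (Ioo 0 ε) := hanti.injOn.mono Ioo_subset_Ioc_self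
  have hSurj : SurjOn σ (Ioo 0 ε) (Ioi 0) := by
    intro s hs
    obtain ⟨y0, hy0, hy0s⟩ := hunb s
    have hy0ε : y0 ≤ ε := hy0.2.le
    have hcontI : ContinuousOn σ (Icc y0 ε) := by
      have heq : ∀ y ∈ Icc y0 ε, σ y0 - ∫ t in y0..y, f t = σ y := by
        intro y hy
        have hyI : y ∈ Ioc (0:ℝ) 1 := ⟨hy0.1.trans_le hy.1, hy.2.trans hε1⟩
        have := hsplit y0 (hIoosub hy0) y hyI
        linarith
      refine ContinuousOn.congr ?_ fun y hy => (heq y hy).symm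
      have hcp := (continuousOn_const (c := σ y0)).sub
        (intervalIntegral.continuousOn_primitive_interval'
          (hInt y0 (hIoosub hy0) ε hεI) left_mem_uIcc)
      rwa [uIcc_of_le hy0ε] at hcp
    have hIvt := intermediate_value_Icc' hy0ε hcontI
    have hsmem : s ∈ Icc (σ ε) (σ y0) := by
      rw [hσε]; exact ⟨(mem_Ioi.1 hs).le, hy0s.le⟩
    obtain ⟨c, hc, hcs⟩ := hIvt hsmem
    have hcne : c ≠ ε := by
      intro h
      rw [h, hσε] at hcs
      exact absurd hcs.symm (mem_Ioi.1 hs).ne'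
    exact ⟨c, ⟨hy0.1.trans_le hc.1, lt_of_le_of_ne hc.2 hcne⟩, hcs⟩
  have hBij : BijOn σ (Ioo 0 ε) (Ioi 0) := ⟨hMaps, hInj, hSurj⟩
  -- inverse function
  set τ : ℝ → ℝ := Function.invFunOn σ (Ioo 0 ε) with hτdef
  have hleft : ∀ y ∈ Ioo (0:ℝ) ε, τ (σ y) = y := fun y hy => hInj.leftInvOn_invFunOn hy
  have hmemτ : ∀ s ∈ Ioi (0:ℝ), τ s ∈ Ioo 0 ε ∧ σ (τ s) = s := by
    intro s hs
    obtain ⟨y, hy, hys⟩ := hSurj hs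
    have hex : ∃ a ∈ Ioo (0:ℝ) ε, σ a = s := ⟨y, hy, hys⟩
    exact ⟨Function.invFunOn_mem hex, Function.invFunOn_eq hex⟩
  have hτsm : ContDiffOn ℝ (⊤ : ℕ∞) τ (Ioi 0) := by
    intro s hs
    obtain ⟨hmem, hst⟩ := hmemτ s hs
    have hC : ContDiffAt ℝ (⊤ : ℕ∞) σ (τ s) := hσsm.contDiffAt (isOpen_Ioo.mem_nhds hmem)
    have hd : HasDerivAt σ (-(f (τ s))) (τ s) := hderiv (τ s) hmem
    have h0 : (-(f (τ s))) ≠ 0 := neg_ne_zero.2 (hfpos (τ s) (hIoosub hmem)).ne'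
    have hF := hd.hasFDerivAt_equiv h0
    have hg : ContDiffAt ℝ (⊤ : ℕ∞) (hC.localInverse hF (by simp)) (σ (τ s)) :=
      hC.to_localInverse hF (by simp)
    have hright : ∀ᶠ t in 𝓝 (σ (τ s)), σ (hC.localInverse hF (by simp) t) = t :=
      (hC.hasStrictFDerivAt' hF (by simp)).eventually_right_inverse
    have hgy : hC.localInverse hF (by simp) (σ (τ s)) = τ s :=
      hC.localInverse_apply_image hF (by simp)
    have hmem' : ∀ᶠ t in 𝓝 (σ (τ s)), hC.localInverse hF (by simp) t ∈ Ioo (0:ℝ) ε :=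
      hg.continuousAt (by rw [hgy]; exact isOpen_Ioo.mem_nhds hmem)
    have heq : τ =ᶠ[𝓝 (σ (τ s))] hC.localInverse hF (by simp) := by
      filter_upwards [hright, hmem'] with t h1 h2
      calc τ t = τ (σ (hC.localInverse hF (by simp) t)) := by rw [h1]
        _ = hC.localInverse hF (by simp) t := hleft _ h2
    have hτc : ContDiffAt ℝ (⊤ : ℕ∞) τ (σ (τ s)) := hg.congr_of_eventuallyEq heq
    rw [hst] at hτc
    exact hτc.contDiffWithinAt
  exact ⟨hσsm, hBij, τ, hτsm, hleft, fun s hs => (hmemτ s hs).2⟩
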